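/- Let p ∈ ℂ[M] (M ≅ ℤ^n) with full-dimensional Newton polytope, and define the Monge–Ampère polynomial μ(p) = p^{n+1}·δ(p). For λ ∈ ℚ_{>0} with p^λ ∈ ℂ[M], one has μ(p^λ) = λ^n · p^{(n+1)(λ−1)} · μ(p). -/

import Mathlib

/-!
If `q ^ d = p ^ N`, applying a derivation `D` gives `d · D q / q = N · D p / p`, i.e.
`D log q = λ · D log p` with `λ = N / d`. Applying a second derivation, each entry
`D_i D_j log q` of the logarithmic Hessian is `λ` times the corresponding entry for `p`,
so `δ(q) = λ ^ n · δ(p)`, and multiplying by `q ^ (n + 1)` gives the formula for `μ(q)`.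
-/

noncomputable section

/-- Laurent polynomials in `n` variables over `ℂ`. -/
abbrev LP (n : ℕ) := AddMonoidAlgebra ℂ (Fin n → ℤ)

instance {n : ℕ} : IsDomain (LP n) := NoZeroDivisors.to_isDomain _

/-- The operator `D_i = x_i ∂/∂x_i` on Laurent polynomials:
`D_i χ^m = m_i χ^m`. -/
def Dop {n : ℕ} (i : Fin n) (p : LP n) : LP n :=
  p.coeff.sum fun m c => AddMonoidAlgebra.single m ((m i : ℂ) * c)

/-- `δ(p) = det((D_i D_j log p)_{i,j})` as an element of the field of rational
functions; the entry `D_i D_j log p` equals `(D_iD_j p · p − D_i p · D_j p)/p²`. -/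
def deltaOp {n : ℕ} (p : LP n) : FractionRing (LP n) :=
  Matrix.det (fun i j : Fin n =>
    algebraMap (LP n) (FractionRing (LP n)) (Dop i (Dop j p) * p - Dop i p * Dop j p) /
      (algebraMap (LP n) (FractionRing (LP n)) p) ^ 2)

/-- The canonical embedding `ℤ^n → ℝ^n`. -/
def emb {n : ℕ} (m : Fin n → ℤ) : Fin n → ℝ := fun i => (m i : ℝ)

/-- The Monge–Ampère rational function `μ(p) = p^{n+1}·δ(p)` (for `p` with
full-dimensional Newton polytope it is a Laurent polynomial). -/
def muOp {n : ℕ} (p : LP n) : FractionRing (LP n) :=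
  (algebraMap (LP n) (FractionRing (LP n)) p) ^ (n + 1) * deltaOp p

namespace Derivation

variable {A R : Type*} [CommRing A] [CommRing R] [Algebra A R]

theorem map_pow_mul_self (D : Derivation A R R) (a : R) (k : ℕ) :
    D (a ^ k) * a = k * (a ^ k * D a) := by
  rcases k with _ | k
  · simp
  · rw [leibniz_pow, nsmul_eq_mul, smul_eq_mul, Nat.add_sub_cancel, pow_succ]
    ring

variable [IsDomain R]

theorem natCast_mul_mul_eq_of_pow_eq (D : Derivation A R R) {p q : R} {d N : ℕ}
    (hp : p ≠ 0) (h : q ^ d = p ^ N) : (d : R) * (D q * p) = N * (D p * q) := by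
  refine mul_left_cancel₀ (pow_ne_zero N hp) ?_
  calc p ^ N * (d * (D q * p)) = D (q ^ d) * q * p := by
        rw [D.map_pow_mul_self, h]; ring
    _ = D (p ^ N) * p * q := by rw [h]; ring
    _ = p ^ N * (N * (D p * q)) := by rw [D.map_pow_mul_self]; ring

theorem natCast_mul_hessian_eq_of_pow_eq (D₁ D₂ : Derivation A R R) {p q : R} {d N : ℕ}
    (hp : p ≠ 0) (h : q ^ d = p ^ N) :
    (d : R) * ((D₁ (D₂ q) * q - D₁ q * D₂ q) * p ^ 2) =
      N * ((D₁ (D₂ p) * p - D₁ p * D₂ p) * q ^ 2) := by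
  have h₂ := D₂.natCast_mul_mul_eq_of_pow_eq hp h
  have h₁₂ := congrArg D₁ h₂
  simp only [leibniz, map_natCast, smul_eq_mul, mul_zero, add_zero] at h₁₂
  linear_combination (p * q) * h₁₂ - (D₁ p * q + D₁ q * p) * h₂

theorem hessian_div_eq_of_pow_eq {K : Type*} [CharZero R] [Field K] [Algebra R K]
    [IsFractionRing R K]
    (D₁ D₂ : Derivation A R R) {p q : R} {d N : ℕ} (hp : p ≠ 0) (hd : d ≠ 0)
    (h : q ^ d = p ^ N) :
    algebraMap R K (D₁ (D₂ q) * q - D₁ q * D₂ q) / algebraMap R K q ^ 2 =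
      (N / d : K) *
        (algebraMap R K (D₁ (D₂ p) * p - D₁ p * D₂ p) / algebraMap R K p ^ 2) := by
  have hinj := IsFractionRing.injective R K
  have hq : q ≠ 0 := by
    rintro rfl
    exact pow_ne_zero N hp (by rw [← h, zero_pow hd])
  have hdK : (d : K) ≠ 0 := by
    rw [← _root_.map_natCast (algebraMap R K)]
    exact (map_ne_zero_iff _ hinj).mpr (Nat.cast_ne_zero.mpr hd)
  have key := congrArg (algebraMap R K) (D₁.natCast_mul_hessian_eq_of_pow_eq D₂ hp h)
  simp only [map_mul, _root_.map_natCast, map_pow] at key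
  rw [div_mul_div_comm, div_eq_div_iff (pow_ne_zero 2 ((map_ne_zero_iff _ hinj).mpr hq))
    (mul_ne_zero hdK (pow_ne_zero 2 ((map_ne_zero_iff _ hinj).mpr hp)))]
  linear_combination key

end Derivation

section LaurentDerivation

variable {n : ℕ}

theorem Dop_single (i : Fin n) (m : Fin n → ℤ) (c : ℂ) :
    Dop i (AddMonoidAlgebra.single m c) = AddMonoidAlgebra.single m ((m i : ℂ) * c) := by
  rw [Dop, AddMonoidAlgebra.coeff_single, Finsupp.sum_single_index]
  simp

theorem Dop_add (i : Fin n) (a b : LP n) : Dop i (a + b) = Dop i a + Dop i b := by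
  rw [Dop, AddMonoidAlgebra.coeff_add]
  apply Finsupp.sum_add_index <;> intros <;> simp [mul_add]

theorem Dop_smul (i : Fin n) (c : ℂ) (a : LP n) : Dop i (c • a) = c • Dop i a := by
  induction a using AddMonoidAlgebra.induction_linear with
  | zero => simp [Dop]
  | add f g hf hg => rw [smul_add, Dop_add, Dop_add, hf, hg, smul_add]
  | single m c' =>
    simp only [AddMonoidAlgebra.smul_single, Dop_single, smul_eq_mul, mul_left_comm]

theorem Dop_mul (i : Fin n) (a b : LP n) : Dop i (a * b) = a • Dop i b + b • Dop i a := by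
  induction a using AddMonoidAlgebra.induction_linear with
  | zero => simp [Dop]
  | add f g hf hg => simp only [add_mul, Dop_add, hf, hg, smul_eq_mul]; ring
  | single m c =>
    induction b using AddMonoidAlgebra.induction_linear with
    | zero => simp [Dop]
    | add f g hf hg => simp only [mul_add, Dop_add, hf, hg, smul_eq_mul]; ring
    | single m' c' =>
      simp only [AddMonoidAlgebra.single_mul_single, Dop_single, smul_eq_mul]
      rw [add_comm, ← AddMonoidAlgebra.single_add, Pi.add_apply]
      congr 1
      push_cast
      ring

def dopDerivation (i : Fin n) : Derivation ℂ (LP n) (LP n) :=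
  Derivation.mk' ⟨⟨Dop i, Dop_add i⟩, Dop_smul i⟩ (Dop_mul i)

instance : CharZero (LP n) :=
  charZero_of_injective_algebraMap (algebraMap ℂ (LP n)).injective

theorem deltaOp_eq_of_pow_eq {p q : LP n} {d N : ℕ} (hp : p ≠ 0) (hd : d ≠ 0)
    (h : q ^ d = p ^ N) : deltaOp q = ((N : FractionRing (LP n)) / d) ^ n * deltaOp p := by
  calc deltaOp q
      = Matrix.det ((N / d : FractionRing (LP n)) • Matrix.of fun i j : Fin n =>
          algebraMap (LP n) (FractionRing (LP n)) (Dop i (Dop j p) * p - Dop i p * Dop j p) /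
            algebraMap (LP n) (FractionRing (LP n)) p ^ 2) := by
        refine congrArg Matrix.det (Matrix.ext fun i j => ?_)
        exact (dopDerivation i).hessian_div_eq_of_pow_eq (dopDerivation j) hp hd h
    _ = _ := by rw [Matrix.det_smul, Fintype.card_fin]; rfl

end LaurentDerivation

theorem statement6_general {n : ℕ} (p : LP n) (hp : p ≠ 0)
    (lam : ℚ) (hlam : 0 < lam) (q : LP n) (hq : q ^ lam.den = p ^ lam.num.toNat) :
    muOp q =
      algebraMap (LP n) (FractionRing (LP n)) (algebraMap ℂ (LP n) ((lam : ℂ) ^ n)) *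
        ((algebraMap (LP n) (FractionRing (LP n)) q) ^ (n + 1) /
          (algebraMap (LP n) (FractionRing (LP n)) p) ^ (n + 1)) * muOp p := by
  have hlam_eq : (lam : ℂ) = (lam.num.toNat : ℂ) / lam.den := by
    rw [Rat.cast_def, ← Int.toNat_of_nonneg (Rat.num_pos.mpr hlam).le]
    rfl
  have hpK : algebraMap (LP n) (FractionRing (LP n)) p ≠ 0 :=
    (map_ne_zero_iff _ (IsFractionRing.injective _ _)).mpr hp
  rw [muOp, muOp, deltaOp_eq_of_pow_eq hp lam.den_nz hq, ← IsScalarTower.algebraMap_apply,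
    map_pow, hlam_eq, map_div₀, map_natCast, map_natCast]
  field_simp

/-- let `p` be a Laurent polynomial whose Newton polytope is
full-dimensional and `λ ∈ ℚ_{>0}` with `p^λ` again a Laurent polynomial `q`
(i.e. `q^(denom λ) = p^(numer λ)`). Then `μ(p^λ) = λ^n·p^{(n+1)(λ−1)}·μ(p)`;
here the (rational) power `p^{(n+1)(λ−1)}` equals `q^{n+1}/p^{n+1}` since
`q = p^λ`. -/
theorem statement6 {n : ℕ} (p : LP n) (hp : p ≠ 0)
    (hfull : affineSpan ℝ (emb '' (p.coeff.support : Set (Fin n → ℤ))) = ⊤)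
    (lam : ℚ) (hlam : 0 < lam) (q : LP n) (hq : q ^ lam.den = p ^ lam.num.toNat) :
    muOp q =
      algebraMap (LP n) (FractionRing (LP n)) (algebraMap ℂ (LP n) ((lam : ℂ) ^ n)) *
        ((algebraMap (LP n) (FractionRing (LP n)) q) ^ (n + 1) /
          (algebraMap (LP n) (FractionRing (LP n)) p) ^ (n + 1)) * muOp p :=
  statement6_general p hp lam hlam q hq
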